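/- Let E be a finite-dimensional real normed space, let V and L be complementary linear subspaces of E with h := dim V ≥ 1, and suppose C > 0 satisfies C‖P_L g‖ ≤ dist(g, V) for every g ∈ E; let 0 < α < C/2. Let Γ ⊆ E be a compact C_V(α)-set with μH^h(Γ) < ∞ and with Θ^h_*(μH^h⌞Γ, x) > 0 for μH^h-almost every x ∈ Γ. Then for every Borel set A ⊆ E one has μH^h(A ∩ Γ) = 0 if and only if μH^h(P_V(A ∩ Γ)) = 0; that is, the measure A ↦ μH^h(P_V(A ∩ Γ)) and the measure μH^h⌞Γ are mutually absolutely continuous. -/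

import Mathlib

open MeasureTheory Metric Filter Set
open scoped ENNReal Topology

variable {E : Type*}

/-- Lower `h`-density of a measure at a point. -/
noncomputable def lowerDensity [NormedAddCommGroup E] [MeasurableSpace E]
    (φ : Measure E) (h : ℝ) (x : E) : ℝ≥0∞ :=
  liminf (fun r : ℝ => φ (closedBall x r) / ENNReal.ofReal (r ^ h)) (𝓝[>] (0 : ℝ))

/-- The cone `C_V(α)` of all points whose distance from `V` is at most `α` times their norm. -/
def cone [NormedAddCommGroup E] [NormedSpace ℝ E] (V : Submodule ℝ E) (α : ℝ) : Set E :=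
  {w : E | infDist w (V : Set E) ≤ α * ‖w‖}

/-- A `C_V(α)`-set: all differences of pairs of points of `Γ` lie in the cone `C_V(α)`. -/
def IsConeSet [NormedAddCommGroup E] [NormedSpace ℝ E]
    (V : Submodule ℝ E) (α : ℝ) (Γ : Set E) : Prop :=
  ∀ p ∈ Γ, ∀ q ∈ Γ, q - p ∈ cone V α

/-- The projection onto `P` along the complementary subspace `Q`, viewed as a map `E → E`. -/
noncomputable def splitProj [NormedAddCommGroup E] [NormedSpace ℝ E]
    (P Q : Submodule ℝ E) (hc : IsCompl P Q) (g : E) : E :=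
  (P.linearProjOfIsCompl Q hc g : E)

/-!
On a `C_V(α)`-set `Γ` the component `P_L (q - p)` of a difference is at most `α / C < 1 / 2`
times `‖q - p‖`, so `‖q - p‖ ≤ 2 ‖P_V q - P_V p‖`: the projection `P_V` is bi-Lipschitz on `Γ`.
Lipschitz maps do not increase `μH[h]` by more than a constant factor, so `P_V` and its inverse
on `P_V '' Γ` both send null sets to null sets.
-/

theorem hausdorffMeasure_image_eq_zero_iff {X Y : Type*} [EMetricSpace X] [MeasurableSpace X]
    [BorelSpace X] [EMetricSpace Y] [MeasurableSpace Y] [BorelSpace Y]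
    {f : X → Y} {s : Set X} {K K' : NNReal} (hf : LipschitzOnWith K f s)
    (hf' : AntilipschitzWith K' (s.domRestrict f)) {d : ℝ} (hd : 0 ≤ d) :
    μH[d] (f '' s) = 0 ↔ μH[d] s = 0 := by
  refine ⟨fun h0 ↦ le_antisymm ?_ zero_le, fun h0 ↦ le_antisymm ?_ zero_le⟩
  · calc μH[d] s = μH[d] (univ : Set s) := by
          rw [← (isometry_subtype_coe (s := s)).hausdorffMeasure_image (Or.inl hd), image_univ,
            Subtype.range_coe]
      _ ≤ (K' : ℝ≥0∞) ^ d * μH[d] (s.domRestrict f '' univ) :=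
          hf'.le_hausdorffMeasure_image hd _
      _ = 0 := by rw [image_univ, range_domRestrict, h0, mul_zero]
  · calc μH[d] (f '' s) ≤ (K : ℝ≥0∞) ^ d * μH[d] s := hf.hausdorffMeasure_image_le hd
      _ = 0 := by rw [h0, mul_zero]

section splitProj

variable [NormedAddCommGroup E] [NormedSpace ℝ E]

theorem splitProj_add_splitProj {P Q : Submodule ℝ E} (hc : IsCompl P Q) (g : E) :
    splitProj P Q hc g + splitProj Q P hc.symm g = g :=
  Submodule.projection_add_projection_eq_self hc g

theorem splitProj_sub {P Q : Submodule ℝ E} (hc : IsCompl P Q) (g g' : E) :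
    splitProj P Q hc (g - g') = splitProj P Q hc g - splitProj P Q hc g' := by
  simp only [splitProj, map_sub, Submodule.coe_sub]

theorem exists_lipschitzWith_splitProj [FiniteDimensional ℝ E] {P Q : Submodule ℝ E}
    (hc : IsCompl P Q) : ∃ K, LipschitzWith K (splitProj P Q hc) :=
  ⟨_, (LinearMap.toContinuousLinearMap (P.subtype ∘ₗ P.projectionOnto Q hc)).lipschitz⟩

theorem norm_le_two_mul_norm_splitProj_of_mem_cone {V L : Submodule ℝ E} (hc : IsCompl V L)
    {C α : ℝ} (hC : 0 < C) (hproj : ∀ g : E, C * ‖splitProj L V hc.symm g‖ ≤ infDist g V)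
    (hαC : α < C / 2) {w : E} (hw : w ∈ cone V α) :
    ‖w‖ ≤ 2 * ‖splitProj V L hc w‖ := by
  have hL : C * ‖splitProj L V hc.symm w‖ ≤ C * (‖w‖ / 2) := by
    calc C * ‖splitProj L V hc.symm w‖ ≤ α * ‖w‖ := (hproj w).trans hw
      _ ≤ C / 2 * ‖w‖ := by gcongr
      _ = C * (‖w‖ / 2) := by ring
  have hL' := le_of_mul_le_mul_left hL hC
  have := norm_add_le (splitProj V L hc w) (splitProj L V hc.symm w)
  rw [splitProj_add_splitProj] at this
  linarith

theorem IsConeSet.mono {V : Submodule ℝ E} {α : ℝ}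
    {Γ Γ' : Set E} (hΓ : IsConeSet V α Γ) (hsub : Γ' ⊆ Γ) : IsConeSet V α Γ' :=
  fun p hp q hq ↦ hΓ p (hsub hp) q (hsub hq)

theorem IsConeSet.antilipschitzWith_splitProj {V L : Submodule ℝ E} (hc : IsCompl V L) {C α : ℝ} (hC : 0 < C)
    (hproj : ∀ g : E, C * ‖splitProj L V hc.symm g‖ ≤ infDist g V) (hαC : α < C / 2)
    {Γ : Set E} (hΓ : IsConeSet V α Γ) :
    AntilipschitzWith 2 (Γ.domRestrict (splitProj V L hc)) :=
  AntilipschitzWith.of_le_mul_dist fun p q ↦ by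
    simpa [Subtype.dist_eq, dist_eq_norm, splitProj_sub] using
      norm_le_two_mul_norm_splitProj_of_mem_cone hc hC hproj hαC (hΓ q q.2 p p.2)

end splitProj

theorem stmt17_general [NormedAddCommGroup E] [NormedSpace ℝ E] [FiniteDimensional ℝ E]
    [MeasurableSpace E] [BorelSpace E]
    (V L : Submodule ℝ E) (hc : IsCompl V L) (h : ℕ)
    (C : ℝ) (hC : 0 < C)
    (hproj : ∀ g : E, C * ‖splitProj L V hc.symm g‖ ≤ infDist g (V : Set E))
    (α : ℝ) (hαC : α < C / 2)
    (Γ : Set E) (hΓ : IsConeSet V α Γ) :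
    ∀ A : Set E, MeasurableSet A →
      (μH[(h : ℝ)] (A ∩ Γ) = 0 ↔ μH[(h : ℝ)] (splitProj V L hc '' (A ∩ Γ)) = 0) := by
  intro A _
  obtain ⟨K, hK⟩ := exists_lipschitzWith_splitProj hc
  exact (hausdorffMeasure_image_eq_zero_iff hK.lipschitzOnWith
    ((hΓ.mono inter_subset_right).antilipschitzWith_splitProj hc hC hproj hαC)
    (Nat.cast_nonneg h)).symm

theorem stmt17 [NormedAddCommGroup E] [NormedSpace ℝ E] [FiniteDimensional ℝ E]
    [MeasurableSpace E] [BorelSpace E]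
    (V L : Submodule ℝ E) (hc : IsCompl V L) (h : ℕ) (h1 : 1 ≤ h)
    (hdim : Module.finrank ℝ V = h)
    (C : ℝ) (hC : 0 < C)
    (hproj : ∀ g : E, C * ‖splitProj L V hc.symm g‖ ≤ infDist g (V : Set E))
    (α : ℝ) (hα0 : 0 < α) (hαC : α < C / 2)
    (Γ : Set E) (hΓc : IsCompact Γ) (hΓ : IsConeSet V α Γ) (hfin : μH[(h : ℝ)] Γ < ⊤)
    (hpos : ∀ᵐ x ∂(μH[(h : ℝ)].restrict Γ), 0 < lowerDensity (μH[(h : ℝ)].restrict Γ) h x) :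
    ∀ A : Set E, MeasurableSet A →
      (μH[(h : ℝ)] (A ∩ Γ) = 0 ↔ μH[(h : ℝ)] (splitProj V L hc '' (A ∩ Γ)) = 0) :=
  stmt17_general V L hc h C hC hproj α hαC Γ hΓ
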